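/- As an identity of formal power series in z, Σ_{n∈ℤ} (−1)^n z^{n²} = Π_{k=1}^∞ (1−z^{2k−1})(1−z^k). Here Σ_{n∈ℤ} (−1)^n z^{n²} = 1 + 2Σ_{n≥1} (−1)^n z^{n²}. -/

import Mathlib

/-!
The finite Jacobi triple product
`∏_{k<N} (Y + q^{2k+1}) (1 + q^{2k+1} Y) = ∑_{s=0}^{2N} q^{(s-N)²} [2N, s]_{q²} Y^s`
follows by induction on `N` from a three-term recurrence for Gaussian binomials. At `Y = -1` it
gives `(q; q²)_N² = ∑_s (-1)^{s-N} q^{(s-N)²} [2N, s]_{q²}`. Multiplying by `(q²; q²)_{2N}`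
turns `[2N, s]_{q²}` into a product of factors `1 - q^{2k}` with `2k > 2 min(s, 2N - s)`, so modulo
`q^{n+1}` (for `n ≤ N`) the right side becomes the partial theta sum, while the left side is
`(q; q²)_N² (q²; q²)_{2N} ≡ (q; q²)_N (q; q)_N`, the partial product of the theorem.
-/

/-- The theta series `∑_{n ∈ ℤ} (-1)^n z^(n²) = 1 + 2 ∑_{n ≥ 1} (-1)^n z^(n²)` as a formal
power series over `ℤ`: its `m`-th coefficient is `1` for `m = 0`, `2·(-1)^n` if `m = n²` with
`n ≥ 1`, and `0` otherwise. -/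
def thetaAlt : PowerSeries ℤ :=
  PowerSeries.mk fun m =>
    if m = 0 then 1 else if Nat.sqrt m ^ 2 = m then 2 * (-1 : ℤ) ^ Nat.sqrt m else 0

open Finset

section Truncation

variable {A : Type*} [CommRing A] (x : A)

theorem one_sub_pow_smodEq_one {c e : ℕ} (h : c ≤ e) : 1 - x ^ e ≡ 1 [SMOD Ideal.span {x ^ c}] := by
  rw [SModEq.sub_mem, Ideal.mem_span_singleton, sub_sub_cancel_left, dvd_neg]
  exact pow_dvd_pow x h

theorem prod_one_sub_pow_smodEq_one {ι : Type*} {s : Finset ι} {e : ι → ℕ} {c : ℕ}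
    (h : ∀ i ∈ s, c ≤ e i) : ∏ i ∈ s, (1 - x ^ e i) ≡ 1 [SMOD Ideal.span {x ^ c}] := by
  simpa using SModEq.prod fun i hi => one_sub_pow_smodEq_one x (h i hi)

theorem pow_mul_smodEq_pow {a : A} {b c d : ℕ} (ha : a ≡ 1 [SMOD Ideal.span {x ^ c}])
    (hb : b ≤ d + c) : x ^ d * a ≡ x ^ d [SMOD Ideal.span {x ^ b}] := by
  rw [SModEq.sub_mem, Ideal.mem_span_singleton] at ha ⊢
  calc x ^ b ∣ x ^ d * x ^ c := by rw [← pow_add]; exact pow_dvd_pow x hb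
    _ ∣ x ^ d * (a - 1) := mul_dvd_mul_left _ ha
    _ = x ^ d * a - x ^ d := by ring

end Truncation

section GaussianBinomial

variable {R : Type*} [CommRing R] (q : R)

/-- The Gaussian binomial coefficient `[m, j]_q`. The lower index is an integer so that both
`q`-Pascal rules hold for every `j`; it vanishes outside `0 ≤ j ≤ m`. -/
def qBinomial : ℕ → ℤ → R
  | 0, j => if j = 0 then 1 else 0
  | m + 1, j => qBinomial m j + q ^ (m + 1 - j).toNat * qBinomial m (j - 1)

/-- The `q`-Pochhammer symbol `(q; q)_m`. -/
def qPochhammer (m : ℕ) : R := ∏ k ∈ range m, (1 - q ^ (k + 1))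

variable {q}

theorem qBinomial_succ (m : ℕ) (j : ℤ) :
    qBinomial q (m + 1) j = qBinomial q m j + q ^ (m + 1 - j).toNat * qBinomial q m (j - 1) :=
  rfl

theorem qBinomial_of_neg {j : ℤ} (hj : j < 0) (m : ℕ) : qBinomial q m j = 0 := by
  induction m generalizing j with
  | zero => simp [qBinomial, hj.ne]
  | succ m ih => rw [qBinomial_succ, ih hj, ih (by omega), mul_zero, add_zero]

theorem qBinomial_of_lt {m : ℕ} {j : ℤ} (hj : m < j) : qBinomial q m j = 0 := by
  induction m generalizing j with
  | zero => simp [qBinomial, show j ≠ 0 by omega]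
  | succ m ih => rw [qBinomial_succ, ih (by omega), ih (by omega), mul_zero, add_zero]

theorem qBinomial_zero_right (m : ℕ) : qBinomial q m 0 = 1 := by
  induction m with
  | zero => simp [qBinomial]
  | succ m ih => rw [qBinomial_succ, ih, qBinomial_of_neg (by norm_num), mul_zero, add_zero]

theorem qBinomial_self (m : ℕ) : qBinomial q m m = 1 := by
  induction m with
  | zero => simp [qBinomial]
  | succ m ih =>
    rw [qBinomial_succ, qBinomial_of_lt (by omega), Nat.cast_succ, add_sub_cancel_right, ih]
    simp

theorem pow_mul_qBinomial_congr (x : R) {m : ℕ} {i : ℤ} {a b : ℕ} (h : 0 ≤ i → i ≤ m → a = b) :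
    x ^ a * qBinomial q m i = x ^ b * qBinomial q m i := by
  rcases lt_or_ge i 0 with hi | hi
  · simp [qBinomial_of_neg hi]
  rcases lt_or_ge (m : ℤ) i with hi' | hi'
  · simp [qBinomial_of_lt hi']
  rw [h hi hi']

theorem qBinomial_succ' (m : ℕ) (j : ℤ) :
    qBinomial q (m + 1) j = q ^ j.toNat * qBinomial q m j + qBinomial q m (j - 1) := by
  induction m generalizing j with
  | zero =>
    rcases eq_or_ne j 0 with rfl | h0
    · simp [qBinomial]
    rcases eq_or_ne j 1 with rfl | h1
    · simp [qBinomial]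
    simp [qBinomial, h0, sub_eq_zero, h1]
  | succ m ih =>
    have pascal : qBinomial q (m + 1) (j - 1) =
        qBinomial q m (j - 1) + q ^ (m + 2 - j).toNat * qBinomial q m (j - 1 - 1) := by
      rw [qBinomial_succ, show (m : ℤ) + 1 - (j - 1) = m + 2 - j by ring]
    have hexp := pow_mul_qBinomial_congr (q := q) q (m := m) (i := j - 1)
      (a := (m + 2 - j).toNat + (j - 1).toNat) (b := j.toNat + (m + 1 - j).toNat) (by omega)
    rw [qBinomial_succ (m + 1), show ((m + 1 : ℕ) : ℤ) + 1 - j = m + 2 - j by push_cast; ring]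
    linear_combination ih j + q ^ (m + 2 - j).toNat * ih (j - 1) -
      q ^ j.toNat * qBinomial_succ (q := q) m j - pascal + hexp

theorem qBinomial_add_two (m : ℕ) (s : ℤ) :
    qBinomial q (m + 2) s = q ^ s.toNat * qBinomial q m s +
      (1 + q ^ (m + 1)) * qBinomial q m (s - 1) +
      q ^ (m + 2 - s).toNat * qBinomial q m (s - 2) := by
  have pascal : qBinomial q (m + 1) (s - 1) =
      qBinomial q m (s - 1) + q ^ (m + 2 - s).toNat * qBinomial q m (s - 2) := by
    rw [qBinomial_succ, show (m : ℤ) + 1 - (s - 1) = m + 2 - s by ring,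
      show s - 1 - 1 = s - 2 by ring]
  have hexp := pow_mul_qBinomial_congr (q := q) q (m := m) (i := s - 1)
    (a := s.toNat + (m + 1 - s).toNat) (b := m + 1) (by omega)
  rw [qBinomial_succ', qBinomial_succ, pascal]
  linear_combination hexp

theorem qPochhammer_succ (m : ℕ) : qPochhammer q (m + 1) = qPochhammer q m * (1 - q ^ (m + 1)) :=
  prod_range_succ _ _

theorem qBinomial_mul_qPochhammer_sub {m j : ℕ} (hj : j ≤ m) :
    qBinomial q m j * qPochhammer q (m - j) = ∏ k ∈ range (m - j), (1 - q ^ (j + k + 1)) := by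
  induction m generalizing j with
  | zero => simp [Nat.le_zero.mp hj, qBinomial_zero_right, qPochhammer]
  | succ m ih =>
    obtain rfl | ⟨i, rfl⟩ : j = 0 ∨ ∃ i, j = i + 1 := by rcases j with _ | i <;> simp
    · simp [qBinomial_zero_right, qPochhammer]
    obtain rfl | hj : i = m ∨ i < m := by omega
    · simpa [qPochhammer] using qBinomial_self (q := q) (i + 1)
    obtain ⟨t, rfl⟩ : ∃ t, m = i + 1 + t := ⟨m - (i + 1), by omega⟩
    set P := ∏ k ∈ range t, (1 - q ^ (i + 1 + k + 1))
    have h1 : qBinomial q (i + 1 + t) ((i : ℤ) + 1) * qPochhammer q t = P := by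
      have := ih (j := i + 1) (by omega)
      rw [show i + 1 + t - (i + 1) = t by omega] at this
      exact_mod_cast this
    have h2 : qBinomial q (i + 1 + t) i * qPochhammer q (t + 1) = (1 - q ^ (i + 1)) * P := by
      have := ih (j := i) (by omega)
      rw [show i + 1 + t - i = t + 1 by omega, prod_range_succ'] at this
      rw [this, mul_comm]
      exact congrArg _ (prod_congr rfl fun k _ => by ring_nf)
    rw [show i + 1 + t + 1 - (i + 1) = t + 1 by omega, prod_range_succ, qBinomial_succ,
      show ((i + 1 + t : ℕ) : ℤ) + 1 - ((i + 1 : ℕ) : ℤ) = ((t + 1 : ℕ) : ℤ) by push_cast; ring,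
      Int.toNat_natCast, Nat.cast_succ, add_sub_cancel_right, qPochhammer_succ]
    rw [qPochhammer_succ] at h2
    linear_combination (1 - q ^ (t + 1)) * h1 + q ^ (t + 1) * h2

theorem qBinomial_mul_qPochhammer {m s : ℕ} (hs : s ≤ m) :
    qBinomial q m s * qPochhammer q m =
      (∏ k ∈ range (m - s), (1 - q ^ (s + k + 1))) * ∏ k ∈ range s, (1 - q ^ (m - s + k + 1)) := by
  rw [← qBinomial_mul_qPochhammer_sub hs, mul_assoc, qPochhammer, qPochhammer,
    ← prod_range_add, Nat.sub_add_cancel hs]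

theorem qBinomial_mul_qPochhammer_smodEq_one {m s : ℕ} (hs : s ≤ m) :
    qBinomial q m s * qPochhammer q m ≡ 1 [SMOD Ideal.span {q ^ (min s (m - s) + 1)}] := by
  have h := (prod_one_sub_pow_smodEq_one q (s := range (m - s)) (e := fun k => s + k + 1)
    (c := min s (m - s) + 1) fun k _ => by omega).mul
    (prod_one_sub_pow_smodEq_one q (s := range s) (e := fun k => m - s + k + 1)
      (c := min s (m - s) + 1) fun k _ => by omega)
  rwa [mul_one, ← qBinomial_mul_qPochhammer hs] at h

end GaussianBinomial

section JacobiTripleProduct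

open Polynomial

variable {R : Type*} [CommRing R] (q : R)

def jacobiCoeff (N : ℕ) (s : ℤ) : R := q ^ ((s - N).natAbs ^ 2) * qBinomial (q ^ 2) (2 * N) s

theorem jacobiCoeff_of_neg (N : ℕ) {s : ℤ} (hs : s < 0) : jacobiCoeff q N s = 0 := by
  rw [jacobiCoeff, qBinomial_of_neg hs, mul_zero]

theorem jacobiCoeff_succ (N : ℕ) (s : ℤ) :
    jacobiCoeff q (N + 1) s = q ^ (2 * N + 1) * jacobiCoeff q N s +
      (1 + q ^ (4 * N + 2)) * jacobiCoeff q N (s - 1) +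
      q ^ (2 * N + 1) * jacobiCoeff q N (s - 2) := by
  have hlow := pow_mul_qBinomial_congr (q := q ^ 2) q (m := 2 * N) (i := s)
    (a := (s - 1 - N).natAbs ^ 2 + 2 * s.toNat) (b := 2 * N + 1 + (s - N).natAbs ^ 2)
    fun h _ => by zify; push_cast [sq_abs, Int.toNat_of_nonneg h]; ring
  have hhigh := pow_mul_qBinomial_congr (q := q ^ 2) q (m := 2 * N) (i := s - 2)
    (a := (s - 1 - N).natAbs ^ 2 + 2 * (2 * N + 2 - s).toNat)
    (b := 2 * N + 1 + (s - 2 - N).natAbs ^ 2)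
    fun _ h => by
      zify
      push_cast [sq_abs, Int.toNat_of_nonneg (by omega : 0 ≤ 2 * (N : ℤ) + 2 - s)]
      ring
  have hmid : (s - (N + 1 : ℕ)).natAbs = (s - 1 - N).natAbs := by push_cast; ring_nf
  simp only [jacobiCoeff]
  rw [show 2 * (N + 1) = 2 * N + 2 by ring, qBinomial_add_two, hmid]
  push_cast at hlow hhigh ⊢
  simp only [← pow_mul, pow_add] at hlow hhigh ⊢
  linear_combination hlow + hhigh

theorem coeff_sum_jacobiCoeff_mul_X_pow (N d j : ℕ) :
    ((∑ s ∈ range (2 * N + 1), C (jacobiCoeff q N s) * X ^ s) * X ^ d).coeff j =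
      jacobiCoeff q N (j - d) := by
  rw [coeff_mul_X_pow']
  split_ifs with h
  · simp only [finsetSum_coeff, coeff_C_mul_X_pow, sum_ite_eq, mem_range]
    rw [Nat.cast_sub h]
    split_ifs with h'
    · rfl
    · rw [jacobiCoeff, qBinomial_of_lt (by omega), mul_zero]
  · rw [jacobiCoeff_of_neg q N (by omega)]

theorem finite_jacobi_triple_product (N : ℕ) :
    ∏ k ∈ range N, (X + C (q ^ (2 * k + 1))) * (1 + C (q ^ (2 * k + 1)) * X) =
      ∑ s ∈ range (2 * N + 1), C (jacobiCoeff q N s) * X ^ s := by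
  induction N with
  | zero => simp [jacobiCoeff, qBinomial]
  | succ N ih =>
    rw [prod_range_succ, ih]
    set T := ∑ s ∈ range (2 * N + 1), C (jacobiCoeff q N s) * X ^ s
    have expand : T * ((X + C (q ^ (2 * N + 1))) * (1 + C (q ^ (2 * N + 1)) * X)) =
        C (q ^ (2 * N + 1)) * (T * X ^ 0) + C (1 + q ^ (4 * N + 2)) * (T * X ^ 1) +
          C (q ^ (2 * N + 1)) * (T * X ^ 2) := by
      rw [show q ^ (4 * N + 2) = q ^ (2 * N + 1) * q ^ (2 * N + 1) by ring, map_add, map_one, C_mul]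
      ring
    ext j
    have := coeff_sum_jacobiCoeff_mul_X_pow q (N + 1) 0 j
    rw [pow_zero, mul_one] at this
    rw [expand, this, jacobiCoeff_succ, coeff_add, coeff_add, coeff_C_mul, coeff_C_mul, coeff_C_mul,
      coeff_sum_jacobiCoeff_mul_X_pow, coeff_sum_jacobiCoeff_mul_X_pow,
      coeff_sum_jacobiCoeff_mul_X_pow]
    push_cast
    ring_nf

theorem prod_one_sub_odd_sq_eq_sum_jacobiCoeff (N : ℕ) :
    (∏ k ∈ range N, (1 - q ^ (2 * k + 1))) ^ 2 =
      (-1) ^ N * ∑ s ∈ range (2 * N + 1), (-1) ^ s * jacobiCoeff q N s := by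
  have h := congrArg (eval (-1)) (finite_jacobi_triple_product q N)
  have factor : ∀ a : R, (-1 + a) * (1 + a * -1) = -1 * (1 - a) ^ 2 := fun a => by ring
  simp only [eval_prod, eval_finsetSum, eval_mul, eval_add, eval_C, eval_X, eval_one, eval_pow] at h
  rw [prod_congr rfl fun k _ => factor _, prod_mul_distrib, prod_const, card_range, prod_pow] at h
  calc (∏ k ∈ range N, (1 - q ^ (2 * k + 1))) ^ 2
      = (-1) ^ N * ((-1) ^ N * (∏ k ∈ range N, (1 - q ^ (2 * k + 1))) ^ 2) := by
        rw [← mul_assoc, ← pow_add, ← two_mul, pow_mul, neg_one_sq, one_pow, one_mul]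
    _ = _ := by rw [h]; simp only [mul_comm]

end JacobiTripleProduct

section TruncatedProducts

variable {A : Type*} [CommRing A] (x : A)

@[to_additive]
theorem prod_Icc_eq_prod_range_succ {M : Type*} [CommMonoid M] (f : ℕ → M) (N : ℕ) :
    ∏ k ∈ Icc 1 N, f k = ∏ k ∈ range N, f (k + 1) := by
  rw [range_eq_Ico, prod_Ico_add', zero_add, Ico_add_one_right_eq_Icc]

theorem prod_range_two_mul {M : Type*} [CommMonoid M] (f : ℕ → M) (N : ℕ) :
    ∏ k ∈ range (2 * N), f k = (∏ k ∈ range N, f (2 * k)) * ∏ k ∈ range N, f (2 * k + 1) := by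
  induction N with
  | zero => simp
  | succ N ih =>
    rw [show 2 * (N + 1) = 2 * N + 1 + 1 by ring, prod_range_succ, prod_range_succ, ih,
      prod_range_succ, prod_range_succ, mul_mul_mul_comm, mul_assoc]

theorem qPochhammer_sq (m : ℕ) :
    qPochhammer (x ^ 2) m = ∏ k ∈ range m, (1 - x ^ (2 * (k + 1))) := by
  simp only [qPochhammer, pow_mul]

theorem prod_range_add_smodEq {a b c : ℕ} {e : ℕ → ℕ} (h : ∀ k, c ≤ e (a + k)) :
    ∏ k ∈ range (a + b), (1 - x ^ e k) ≡ ∏ k ∈ range a, (1 - x ^ e k)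
      [SMOD Ideal.span {x ^ c}] := by
  rw [prod_range_add]
  simpa using SModEq.rfl.mul (prod_one_sub_pow_smodEq_one x (s := range b) fun k _ => h k)

theorem prod_one_sub_pow_smodEq {n N : ℕ} (hn : n ≤ N) :
    ∏ k ∈ Icc 1 N, (1 - x ^ (2 * k - 1)) * (1 - x ^ k) ≡
      (∏ k ∈ range N, (1 - x ^ (2 * k + 1))) ^ 2 * qPochhammer (x ^ 2) (2 * N)
      [SMOD Ideal.span {x ^ (n + 1)}] := by
  set P := ∏ k ∈ range N, (1 - x ^ (2 * k + 1))
  have hfirst : ∏ k ∈ Icc 1 N, (1 - x ^ (2 * k - 1)) * (1 - x ^ k) =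
      P * ∏ k ∈ range N, (1 - x ^ (k + 1)) := by
    rw [prod_Icc_eq_prod_range_succ, prod_mul_distrib]
    congr 1
  have hsplit : ∏ k ∈ range (2 * N), (1 - x ^ (k + 1)) = P * qPochhammer (x ^ 2) N := by
    rw [prod_range_two_mul, qPochhammer_sq]
    congr 1
  have hall : ∏ k ∈ range N, (1 - x ^ (k + 1)) ≡ P * qPochhammer (x ^ 2) N
      [SMOD Ideal.span {x ^ (n + 1)}] := by
    rw [← hsplit, two_mul]
    exact (prod_range_add_smodEq x fun k => by omega).symm
  have heven : qPochhammer (x ^ 2) N ≡ qPochhammer (x ^ 2) (2 * N)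
      [SMOD Ideal.span {x ^ (n + 1)}] := by
    rw [qPochhammer_sq, qPochhammer_sq, two_mul]
    exact (prod_range_add_smodEq x (e := fun k => 2 * (k + 1)) fun k => by omega).symm
  rw [hfirst, sq, mul_assoc]
  exact SModEq.rfl.mul (hall.trans (SModEq.rfl.mul heven))

end TruncatedProducts

section ThetaSeries

variable {A : Type*} [CommRing A] (x : A)

theorem neg_one_pow_mul_self (m : ℕ) : (-1 : A) ^ m * (-1) ^ m = 1 := by
  rw [← mul_pow, neg_one_mul, neg_neg, one_pow]

theorem jacobiCoeff_mul_qPochhammer_smodEq {n N s : ℕ} (hn : n ≤ N) (hs : s ≤ 2 * N) :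
    jacobiCoeff x N s * qPochhammer (x ^ 2) (2 * N) ≡ x ^ (((s : ℤ) - N).natAbs ^ 2)
      [SMOD Ideal.span {x ^ (n + 1)}] := by
  have h := qBinomial_mul_qPochhammer_smodEq_one (q := x ^ 2) hs
  rw [← pow_mul] at h
  rw [jacobiCoeff, mul_assoc]
  refine pow_mul_smodEq_pow x h ?_
  obtain ⟨d, hd⟩ : ∃ d, d = ((s : ℤ) - N).natAbs := ⟨_, rfl⟩
  rw [← hd, show min s (2 * N - s) = N - d by omega]
  nlinarith [Nat.sub_add_cancel (show d ≤ N by omega)]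

theorem sum_neg_one_pow_mul_pow_natAbs_sq (N : ℕ) :
    ∑ s ∈ range (2 * N + 1), (-1) ^ s * x ^ (((s : ℤ) - N).natAbs ^ 2) =
      (-1) ^ N * (1 + 2 * ∑ j ∈ Icc 1 N, (-1) ^ j * x ^ (j ^ 2)) := by
  have hleft : ∀ k ∈ range N, (-1) ^ (N - 1 - k) * x ^ ((((N - 1 - k : ℕ) : ℤ) - N).natAbs ^ 2) =
      (-1) ^ N * ((-1) ^ (k + 1) * x ^ ((k + 1) ^ 2)) := fun k hk => by
    obtain ⟨t, rfl⟩ : ∃ t, N = t + k + 1 := ⟨N - k - 1, by simp at hk; omega⟩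
    rw [show t + k + 1 - 1 - k = t by omega,
      show (((t : ℕ) : ℤ) - ((t + k + 1 : ℕ) : ℤ)).natAbs = k + 1 by omega]
    linear_combination (-(-1) ^ t * x ^ ((k + 1) ^ 2)) * neg_one_pow_mul_self (A := A) (k + 1)
  have hright : ∀ k ∈ range N,
      (-1) ^ (N + (k + 1)) * x ^ ((((N + (k + 1) : ℕ) : ℤ) - N).natAbs ^ 2) =
        (-1) ^ N * ((-1) ^ (k + 1) * x ^ ((k + 1) ^ 2)) := fun k _ => by
    rw [show (((N + (k + 1) : ℕ) : ℤ) - N).natAbs = k + 1 by omega, pow_add, mul_assoc]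
  rw [show 2 * N + 1 = N + (N + 1) by ring, sum_range_add, sum_range_succ', ← sum_range_reflect,
    sum_congr rfl hleft, sum_congr rfl hright, sum_Icc_eq_sum_range_succ]
  simp only [add_zero, sub_self, Int.natAbs_zero, ← mul_sum]
  ring

theorem prod_one_sub_odd_sq_mul_qPochhammer_smodEq {n N : ℕ} (hn : n ≤ N) :
    (∏ k ∈ range N, (1 - x ^ (2 * k + 1))) ^ 2 * qPochhammer (x ^ 2) (2 * N) ≡
      1 + 2 * ∑ j ∈ Icc 1 N, (-1) ^ j * x ^ (j ^ 2) [SMOD Ideal.span {x ^ (n + 1)}] := by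
  have hsum :
      ∑ s ∈ range (2 * N + 1), (-1) ^ s * (jacobiCoeff x N s * qPochhammer (x ^ 2) (2 * N)) ≡
      ∑ s ∈ range (2 * N + 1), (-1) ^ s * x ^ (((s : ℤ) - N).natAbs ^ 2)
      [SMOD Ideal.span {x ^ (n + 1)}] :=
    SModEq.sum fun s hs => SModEq.rfl.mul
      (jacobiCoeff_mul_qPochhammer_smodEq x hn (by simp at hs; omega))
  rw [sum_neg_one_pow_mul_pow_natAbs_sq] at hsum
  calc _ = (-1) ^ N * ∑ s ∈ range (2 * N + 1),
          (-1) ^ s * (jacobiCoeff x N s * qPochhammer (x ^ 2) (2 * N)) := by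
        simp only [prod_one_sub_odd_sq_eq_sum_jacobiCoeff, mul_sum, sum_mul, mul_assoc]
    _ ≡ (-1) ^ N * ((-1) ^ N * (1 + 2 * ∑ j ∈ Icc 1 N, (-1) ^ j * x ^ (j ^ 2)))
        [SMOD Ideal.span {x ^ (n + 1)}] := SModEq.rfl.mul hsum
    _ = _ := by rw [← mul_assoc, neg_one_pow_mul_self, one_mul]

end ThetaSeries

theorem PowerSeries.coeff_eq_of_smodEq {R : Type*} [CommRing R] {n : ℕ} {f g : PowerSeries R}
    (h : f ≡ g [SMOD Ideal.span {X ^ (n + 1)}]) : coeff n f = coeff n g := by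
  rw [SModEq.sub_mem, Ideal.mem_span_singleton, X_pow_dvd_iff] at h
  simpa [sub_eq_zero] using h n n.lt_succ_self

theorem coeff_thetaAlt {n N : ℕ} (hn : n ≤ N) :
    PowerSeries.coeff n thetaAlt = PowerSeries.coeff n
      (1 + 2 * ∑ j ∈ Icc 1 N, (-1) ^ j * (PowerSeries.X : PowerSeries ℤ) ^ (j ^ 2)) := by
  have hsq : ∀ j, n = j ^ 2 ↔ j = Nat.sqrt n ∧ Nat.sqrt n ^ 2 = n := fun j => by
    constructor
    · rintro rfl; simp [Nat.sqrt_eq']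
    · rintro ⟨rfl, h⟩; exact h.symm
  have hC : ∀ j : ℕ, (-1 : PowerSeries ℤ) ^ j = PowerSeries.C ((-1) ^ j) := fun j => by simp
  rw [show (2 : PowerSeries ℤ) = PowerSeries.C 2 from rfl]
  simp only [thetaAlt, PowerSeries.coeff_mk, map_add, PowerSeries.coeff_one,
    PowerSeries.coeff_C_mul, map_sum, hC, PowerSeries.coeff_X_pow, mul_ite, mul_one, mul_zero, hsq,
    ite_and]
  have hmem : n.sqrt ∈ Icc 1 N ↔ n ≠ 0 := by
    rw [mem_Icc, Nat.one_le_iff_ne_zero, Ne, Nat.sqrt_eq_zero]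
    exact and_iff_left ((Nat.sqrt_le_self n).trans hn)
  simp only [sum_ite_eq', hmem]
  split_ifs <;> simp_all

/-- The infinite product is encoded coefficientwise: its `k`-th factor is `1 + O(z^k)`, so its
`n`-th coefficient is that of every partial product over `1 ≤ k ≤ N` with `n ≤ N`. -/
theorem thetaAlt_eq_prod_one_sub (n N : ℕ) (hnN : n ≤ N) :
    PowerSeries.coeff (R := ℤ) n thetaAlt =
      PowerSeries.coeff (R := ℤ) n
        (∏ k ∈ Finset.Icc 1 N,
          (1 - (PowerSeries.X : PowerSeries ℤ) ^ (2 * k - 1)) *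
            (1 - (PowerSeries.X : PowerSeries ℤ) ^ k)) := by
  rw [coeff_thetaAlt hnN]
  exact PowerSeries.coeff_eq_of_smodEq
    ((prod_one_sub_pow_smodEq _ hnN).trans (prod_one_sub_odd_sq_mul_qPochhammer_smodEq _ hnN)).symm
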